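/- Let S be a finite nonempty type (representing state–action pairs), let ρ_E : S → ℝ be a nonnegative vector (the expert occupancy vector), and let Π be a finite nonempty set of nonnegative vectors ρ : S → ℝ (the occupancy vectors of the policies produced by the algorithm). Let r : S → ℝ be a nonnegative reward vector and β > 0 a threshold, and assume ⟨ρ_E, r⟩ > 0. Suppose: (i) every ρ ∈ Π satisfies ⟨ρ, r⟩ ≥ ⟨ρ_E, r⟩ (each learned policy achieves at least the expert's expected cumulative reward); (ii) ρ_E is the unique achiever of its value, i.e. any ρ ∈ Π with ⟨ρ, r⟩ = ⟨ρ_E, r⟩ satisfies ρ = ρ_E; (iii) the fixed-point condition holds: for every vector c : S → ℝ with ⟨ρ_E, c⟩ ≤ β one has min_{ρ ∈ Π} ⟨ρ, c⟩ ≤ β. Then ρ_E ∈ Π; i.e., the alternating constrained-policy-optimization / constraint-adjustment procedure has converged to a policy whose occupancy vector equals the expert's (Theorem 1, occupancy-vector formulation). -/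
import Mathlib

/-- Theorem 1 (occupancy-vector formulation): if every learned occupancy vector in `P`
achieves at least the expert's expected cumulative reward, the expert is the unique
achiever of its value among `P ∪ {ρE}`, and the fixed-point condition of the
constraint-adjustment step holds (every feasible constraint vector `c` gives
`min_{ρ ∈ P} ⟨ρ, c⟩ ≤ β`), then the expert occupancy vector `ρE` belongs to `P`. -/
theorem expert_occupancy_mem_of_fixed_point
    {S : Type*} [Fintype S] [Nonempty S]
    (ρE : S → ℝ) (hρE : ∀ s, 0 ≤ ρE s)
    (P : Finset (S → ℝ)) (hP : P.Nonempty)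
    (hPnn : ∀ ρ ∈ P, ∀ s, 0 ≤ ρ s)
    (r : S → ℝ) (hr : ∀ s, 0 ≤ r s)
    (β : ℝ) (hβ : 0 < β)
    (hEr : 0 < ∑ s, ρE s * r s)
    (hreward : ∀ ρ ∈ P, (∑ s, ρE s * r s) ≤ ∑ s, ρ s * r s)
    (hunique : ∀ ρ ∈ P, (∑ s, ρ s * r s) = (∑ s, ρE s * r s) → ρ = ρE)
    (hfix : ∀ c : S → ℝ, (∑ s, ρE s * c s) ≤ β →
      P.inf' hP (fun ρ => ∑ s, ρ s * c s) ≤ β) :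
    ρE ∈ P := by
  set E := ∑ s, ρE s * r s with hE
  set c : S → ℝ := fun s => (β / E) * r s with hc
  have hEc : (∑ s, ρE s * c s) = β := by
    simp only [hc]
    rw [Finset.sum_congr rfl (fun s _ => by ring : ∀ s ∈ Finset.univ,
      ρE s * ((β / E) * r s) = (β / E) * (ρE s * r s)), ← Finset.mul_sum, ← hE]
    field_simp
  have h := hfix c (le_of_eq hEc)
  obtain ⟨ρ, hρP, hmin⟩ := Finset.exists_mem_eq_inf' hP (fun ρ => ∑ s, ρ s * c s)
  rw [hmin] at h
  have hρc : (∑ s, ρ s * c s) = (β / E) * ∑ s, ρ s * r s := by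
    simp only [hc, Finset.mul_sum]; exact Finset.sum_congr rfl fun s _ => by ring
  rw [hρc] at h
  have hle : (∑ s, ρ s * r s) ≤ E := by
    have hpos : 0 < β / E := div_pos hβ hEr
    have h2 : β / E * (∑ s, ρ s * r s) ≤ β / E * E := by
      rw [div_mul_cancel₀ β hEr.ne']; exact h
    exact le_of_mul_le_mul_left h2 hpos
  have heq : (∑ s, ρ s * r s) = E := le_antisymm hle (hreward ρ hρP)
  have := hunique ρ hρP heq
  rwa [← this]
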